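/- (Sylvester theorem for matching polynomials) Let c : i_1 → i_n be a Hamiltonian path in the weighted graph G, and let θ ∈ ℝ be such that μ(H)(θ) ≠ 0 for every induced weighted subgraph H of G on a nonempty vertex set. Let V_c(θ) be the number of indices j ∈ {1,…,n} such that μ(G∖{i_1,…,i_{j−1}})(θ)/μ(G∖{i_1,…,i_j})(θ) > 0, and let V_{−c}(θ) be defined analogously for the reversed path −c : i_n → i_1. Then both V_c(θ) and V_{−c}(θ) equal the number of roots of μ(G), counted with multiplicity, in the interval (−∞, θ). -/

import Mathlib

open Polynomial
open scoped Classical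

/-- A matching of the weighted graph with edge weights `lam`, inside the vertex set `A`:
a set of pairs `(j,k)` with `j < k`, `lam j k ≠ 0`, endpoints in `A`,
no two pairs sharing a vertex. -/
def IsMatching {n : ℕ} (lam : Fin n → Fin n → ℝ) (A : Finset (Fin n))
    (M : Finset (Fin n × Fin n)) : Prop :=
  (∀ e ∈ M, e.1 < e.2 ∧ lam e.1 e.2 ≠ 0 ∧ e.1 ∈ A ∧ e.2 ∈ A) ∧
  ∀ e ∈ M, ∀ f ∈ M, e ≠ f → e.1 ≠ f.1 ∧ e.1 ≠ f.2 ∧ e.2 ≠ f.1 ∧ e.2 ≠ f.2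

/-- The vertices covered by a matching. -/
def mVerts {n : ℕ} (M : Finset (Fin n × Fin n)) : Finset (Fin n) :=
  M.image Prod.fst ∪ M.image Prod.snd

/-- The finite set of matchings inside the vertex set `A`. -/
noncomputable def matchings {n : ℕ} (lam : Fin n → Fin n → ℝ) (A : Finset (Fin n)) :
    Finset (Finset (Fin n × Fin n)) :=
  Finset.univ.filter fun M => IsMatching lam A M

/-- The weighted matching polynomial of the induced weighted subgraph on the vertex set `A`
(the matching polynomial of the empty graph is `1`). -/
noncomputable def mu {n : ℕ} (r : Fin n → ℝ) (lam : Fin n → Fin n → ℝ)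
    (A : Finset (Fin n)) : Polynomial ℝ :=
  ∑ M ∈ matchings lam A,
    (∏ i ∈ A \ mVerts M, (X - C (r i))) * C (∏ e ∈ M, lam e.1 e.2)

/-- The multivariate matching polynomial evaluated at the complex numbers `x 1, …, x n`. -/
noncomputable def muC {n : ℕ} (lam : Fin n → Fin n → ℝ) (x : Fin n → ℂ) : ℂ :=
  ∑ M ∈ matchings lam (Finset.univ : Finset (Fin n)),
    (∏ i ∈ Finset.univ \ mVerts M, x i) * ∏ e ∈ M, (lam e.1 e.2 : ℂ)

/-- The constant `B_G`: for `n ≥ 3` the maximum over vertices `j` and sets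
`A ⊆ [n] ∖ {j}` with `|A| = n - 2` of `∑_{k ∈ A} (-λ_{jk})`; `-λ_{12}/4` for `n = 2`;
`0` for `n = 1`. -/
noncomputable def BG (n : ℕ) (lam : Fin n → Fin n → ℝ) : ℝ :=
  if 3 ≤ n then
    sSup {S : ℝ | ∃ j : Fin n, ∃ A : Finset (Fin n),
      j ∉ A ∧ A.card = n - 2 ∧ S = ∑ k ∈ A, -lam j k}
  else if h : n = 2 then -lam ⟨0, by omega⟩ ⟨1, by omega⟩ / 4
  else 0

/-- `l` is a path from `i` to `j` inside the vertex set `A`: a nonempty list of distinct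
vertices of `A`, starting at `i`, ending at `j`, with consecutive vertices joined by
edges of nonzero weight. -/
def IsPathIn {n : ℕ} (lam : Fin n → Fin n → ℝ) (A : Finset (Fin n)) (i j : Fin n)
    (l : List (Fin n)) : Prop :=
  l ≠ [] ∧ l.Nodup ∧ (∀ v ∈ l, v ∈ A) ∧ l.head? = some i ∧ l.getLast? = some j ∧
    l.Chain' fun u v => lam u v ≠ 0

/-- `λ_c`: the product of `-λ_e` over the edges `e` of the path `c` (equal to `1` for a
trivial path). -/
def pathWeight {n : ℕ} (lam : Fin n → Fin n → ℝ) (l : List (Fin n)) : ℝ :=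
  ((l.zip l.tail).map fun p => -lam p.1 p.2).prod

/-- A real polynomial viewed as a rational function. -/
noncomputable def toRF (p : Polynomial ℝ) : RatFunc ℝ :=
  algebraMap (Polynomial ℝ) (RatFunc ℝ) p

/-- The graph continued fraction `α_v = μ(A)/μ(A ∖ v)` as a rational function. -/
noncomputable def alpha {n : ℕ} (r : Fin n → ℝ) (lam : Fin n → Fin n → ℝ) (v : Fin n)
    (A : Finset (Fin n)) : RatFunc ℝ :=
  toRF (mu r lam A) / toRF (mu r lam (A.erase v))

/-- `λ_{i∼j} = -(∑_{c ∈ [i→j]} λ_c · μ(A∖c)²) / μ(A∖{i,j})²` as a rational function. -/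
noncomputable def lamSim {n : ℕ} (r : Fin n → ℝ) (lam : Fin n → Fin n → ℝ) (i j : Fin n)
    (A : Finset (Fin n)) : RatFunc ℝ :=
  -(∑ᶠ l ∈ {l : List (Fin n) | IsPathIn lam A i j l},
      toRF (C (pathWeight lam l) * mu r lam (A \ l.toFinset) ^ 2)) /
    toRF (mu r lam ((A.erase i).erase j)) ^ 2

/-- The value of a rational function at `θ`, taken after cancelling common factors;
`none` encodes the value `∞` (a pole). -/
noncomputable def valAt (f : RatFunc ℝ) (θ : ℝ) : Option ℝ :=
  if f.denom.eval θ = 0 then none else some (f.num.eval θ / f.denom.eval θ)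

/-- The set `0_{θ,A}` of θ-essential vertices: `m_θ(A∖v) = m_θ(A) - 1`. -/
def zeroSet {n : ℕ} (r : Fin n → ℝ) (lam : Fin n → Fin n → ℝ) (θ : ℝ)
    (A : Finset (Fin n)) : Set (Fin n) :=
  {v | v ∈ A ∧
    (mu r lam A).rootMultiplicity θ = (mu r lam (A.erase v)).rootMultiplicity θ + 1}

/-- The set `∞_{θ,A}`: `m_θ(A∖v) = m_θ(A) + 1`. -/
def infSet {n : ℕ} (r : Fin n → ℝ) (lam : Fin n → Fin n → ℝ) (θ : ℝ)
    (A : Finset (Fin n)) : Set (Fin n) :=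
  {v | v ∈ A ∧
    (mu r lam (A.erase v)).rootMultiplicity θ = (mu r lam A).rootMultiplicity θ + 1}

/-- The set `+_{θ,A}`: `m_θ(A∖v) = m_θ(A)` and `α_v(A)(θ) > 0`. -/
def plusSet {n : ℕ} (r : Fin n → ℝ) (lam : Fin n → Fin n → ℝ) (θ : ℝ)
    (A : Finset (Fin n)) : Set (Fin n) :=
  {v | v ∈ A ∧
    (mu r lam (A.erase v)).rootMultiplicity θ = (mu r lam A).rootMultiplicity θ ∧
    ∃ t : ℝ, valAt (alpha r lam v A) θ = some t ∧ 0 < t}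

/-- The set `−_{θ,A}`: `m_θ(A∖v) = m_θ(A)` and `α_v(A)(θ) < 0`. -/
def minusSet {n : ℕ} (r : Fin n → ℝ) (lam : Fin n → Fin n → ℝ) (θ : ℝ)
    (A : Finset (Fin n)) : Set (Fin n) :=
  {v | v ∈ A ∧
    (mu r lam (A.erase v)).rootMultiplicity θ = (mu r lam A).rootMultiplicity θ ∧
    ∃ t : ℝ, valAt (alpha r lam v A) θ = some t ∧ t < 0}

/-- The frontier `∂0_{θ,A}`: vertices not in `0_{θ,A}` with a neighbor in `0_{θ,A}`. -/
def frontierZero {n : ℕ} (r : Fin n → ℝ) (lam : Fin n → Fin n → ℝ) (θ : ℝ)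
    (A : Finset (Fin n)) : Set (Fin n) :=
  {v | v ∈ A ∧ v ∉ zeroSet r lam θ A ∧ ∃ w ∈ zeroSet r lam θ A, lam v w ≠ 0}

/-- The underlying simple graph: edges are the pairs with nonzero edge weight. -/
def wGraph {n : ℕ} (lam : Fin n → Fin n → ℝ) : SimpleGraph (Fin n) :=
  SimpleGraph.fromRel fun j k => lam j k ≠ 0

/-!
Deleting the vertices of the path one at a time, it suffices to show that for every vertex `v`
of a vertex set `A` the number of roots of `μ(A)` below `θ` exceeds that of `μ(A ∖ v)` by one if
`μ(A)(θ) / μ(A ∖ v)(θ) > 0` and by zero otherwise.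

By the recursion `μ(A) = (x - r_v) μ(A ∖ v) + ∑_w λ_{vw} μ(A ∖ v ∖ w)` and induction
(Heilmann–Lieb), `μ(A) / μ(A ∖ v)` maps the upper half plane into itself; in particular
`μ(A)` is real-rooted. Along the ray `θ + iε` the argument of `μ(A) / μ(A ∖ v)`, lifted
continuously as a sum of the arguments of the linear factors, therefore stays in `(0, π)`.
It tends to `π/2` as `ε → ∞` (the degrees differ by one) and, as `ε → 0⁺`, to `π` times the
difference of the numbers of roots above `θ`. So these numbers differ by `0` or `1`, and the
sign of `μ(A)(θ) / μ(A ∖ v)(θ)` decides which.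
-/

section Matchings

variable {n : ℕ} {r : Fin n → ℝ} {lam : Fin n → Fin n → ℝ} {A : Finset (Fin n)}
  {M : Finset (Fin n × Fin n)}

lemma mem_matchings : M ∈ matchings lam A ↔ IsMatching lam A M := by
  simp [matchings]

lemma mem_mVerts {x : Fin n} : x ∈ mVerts M ↔ ∃ e ∈ M, e.1 = x ∨ e.2 = x := by
  simp only [mVerts, Finset.mem_union, Finset.mem_image]
  aesop

lemma IsMatching.mVerts_subset (h : IsMatching lam A M) : mVerts M ⊆ A := by
  intro x hx
  obtain ⟨e, he, rfl | rfl⟩ := mem_mVerts.1 hx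
  exacts [(h.1 e he).2.2.1, (h.1 e he).2.2.2]

lemma IsMatching.eq_of_shared_vertex {e f : Fin n × Fin n} {x : Fin n}
    (h : IsMatching lam A M) (he : e ∈ M) (hf : f ∈ M) (hxe : e.1 = x ∨ e.2 = x)
    (hxf : f.1 = x ∨ f.2 = x) : e = f := by
  by_contra hef
  have := h.2 e he f hf hef
  rcases hxe with rfl | rfl <;> rcases hxf with hxf | hxf <;> tauto

lemma isMatching_empty : IsMatching lam A ∅ := by
  constructor <;> simp

lemma matchings_empty : matchings lam (∅ : Finset (Fin n)) = {∅} := by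
  ext M
  simp only [mem_matchings, Finset.mem_singleton]
  refine ⟨fun h => Finset.eq_empty_of_forall_notMem fun e he => ?_,
    fun h => h ▸ isMatching_empty⟩
  simpa using (h.1 e he).2.2.1

lemma isMatching_erase_iff {v : Fin n} :
    IsMatching lam (A.erase v) M ↔ IsMatching lam A M ∧ v ∉ mVerts M := by
  simp only [IsMatching, mem_mVerts, Finset.mem_erase, not_exists, not_and, not_or]
  constructor
  · rintro ⟨h1, h2⟩
    exact ⟨⟨fun e he => ⟨(h1 e he).1, (h1 e he).2.1, (h1 e he).2.2.1.2, (h1 e he).2.2.2.2⟩,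
      h2⟩, fun e he => ⟨(h1 e he).2.2.1.1, (h1 e he).2.2.2.1⟩⟩
  · rintro ⟨⟨h1, h2⟩, hv⟩
    exact ⟨fun e he => ⟨(h1 e he).1, (h1 e he).2.1, ⟨(hv e he).1, (h1 e he).2.2.1⟩,
      ⟨(hv e he).2, (h1 e he).2.2.2⟩⟩, h2⟩

lemma isMatching_insert_iff {e : Fin n × Fin n} (he : e ∉ M) :
    IsMatching lam A (insert e M) ↔
      (e.1 < e.2 ∧ lam e.1 e.2 ≠ 0 ∧ e.1 ∈ A ∧ e.2 ∈ A) ∧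
        e.1 ∉ mVerts M ∧ e.2 ∉ mVerts M ∧ IsMatching lam A M := by
  simp only [IsMatching, Finset.forall_mem_insert, mem_mVerts, not_exists, not_and, not_or]
  constructor
  · rintro ⟨⟨he', hM⟩, ⟨-, hd⟩, hd'⟩
    refine ⟨he', fun f hf => ?_, fun f hf => ?_, hM, fun f hf g hg => (hd' f hf).2 g hg⟩
    all_goals
      have := hd f hf (fun h => he (h ▸ hf))
      exact ⟨fun h => by tauto, fun h => by tauto⟩
  · rintro ⟨he', h1, h2, hM, hd⟩
    refine ⟨⟨he', hM⟩, ⟨fun h => absurd rfl h, fun f hf _ => ?_⟩,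
      fun f hf => ⟨fun _ => ?_, hd f hf⟩⟩
    · have := h1 f hf; have := h2 f hf
      refine ⟨?_, ?_, ?_, ?_⟩ <;> intro h <;> simp_all
    · have := h1 f hf; have := h2 f hf
      refine ⟨?_, ?_, ?_, ?_⟩ <;> intro h <;> simp_all

end Matchings

section MatchingPolynomial

variable {n : ℕ} (r : Fin n → ℝ) (lam : Fin n → Fin n → ℝ)

noncomputable def matchingTerm (A : Finset (Fin n)) (M : Finset (Fin n × Fin n)) : ℝ[X] :=
  (∏ i ∈ A \ mVerts M, (X - C (r i))) * C (∏ e ∈ M, lam e.1 e.2)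

lemma mu_eq_sum_matchingTerm (A : Finset (Fin n)) :
    mu r lam A = ∑ M ∈ matchings lam A, matchingTerm r lam A M := rfl

lemma matchingTerm_empty (A : Finset (Fin n)) :
    matchingTerm r lam A ∅ = ∏ i ∈ A, (X - C (r i)) := by
  simp [matchingTerm, mVerts]

variable {r lam}

lemma natDegree_matchingTerm_lt {A : Finset (Fin n)} {M : Finset (Fin n × Fin n)}
    (h : IsMatching lam A M) (hM : M.Nonempty) : (matchingTerm r lam A M).natDegree < A.card := by
  obtain ⟨e, he⟩ := hM
  have hsub : A \ mVerts M ⊂ A :=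
    Finset.sdiff_ssubset h.mVerts_subset ⟨e.1, mem_mVerts.2 ⟨e, he, Or.inl rfl⟩⟩
  calc (matchingTerm r lam A M).natDegree ≤ (A \ mVerts M).card :=
        (natDegree_mul_C_le _ _).trans_eq (natDegree_finsetProd_X_sub_C_eq_card _ _)
    _ < A.card := Finset.card_lt_card hsub

variable (r lam)

lemma mu_empty : mu r lam (∅ : Finset (Fin n)) = 1 := by
  simp [mu_eq_sum_matchingTerm, matchings_empty, matchingTerm_empty]

lemma mu_eq_prod_X_sub_C_add_sum (A : Finset (Fin n)) :
    mu r lam A = ∏ i ∈ A, (X - C (r i)) +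
      ∑ M ∈ (matchings lam A).erase ∅, matchingTerm r lam A M := by
  rw [mu_eq_sum_matchingTerm, ← Finset.add_sum_erase _ _ (mem_matchings.2 isMatching_empty),
    matchingTerm_empty]

lemma degree_sum_matchingTerm_lt (A : Finset (Fin n)) :
    (∑ M ∈ (matchings lam A).erase ∅, matchingTerm r lam A M).degree <
      (∏ i ∈ A, (X - C (r i))).degree := by
  rw [degree_eq_natDegree (monic_prod_of_monic _ _ fun i _ => monic_X_sub_C (r i)).ne_zero,
    natDegree_finsetProd_X_sub_C_eq_card]
  refine (degree_sum_le _ _).trans_lt ((Finset.sup_lt_iff (WithBot.bot_lt_coe _)).2 fun M hM => ?_)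
  obtain ⟨hne, hM⟩ := Finset.mem_erase.1 hM
  exact degree_le_natDegree.trans_lt <| WithBot.coe_lt_coe.2 <|
    natDegree_matchingTerm_lt (mem_matchings.1 hM) (Finset.nonempty_iff_ne_empty.2 hne)

lemma mu_monic (A : Finset (Fin n)) : (mu r lam A).Monic := by
  rw [mu_eq_prod_X_sub_C_add_sum]
  exact (monic_prod_of_monic _ _ fun i _ => monic_X_sub_C (r i)).add_of_left
    (degree_sum_matchingTerm_lt r lam A)

lemma mu_natDegree (A : Finset (Fin n)) : (mu r lam A).natDegree = A.card := by
  rw [mu_eq_prod_X_sub_C_add_sum,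
    natDegree_add_eq_left_of_degree_lt (degree_sum_matchingTerm_lt r lam A),
    natDegree_finsetProd_X_sub_C_eq_card]

end MatchingPolynomial

lemma min_eq_or_max_eq_iff {α : Type*} [LinearOrder α] {a b x : α} :
    min a b = x ∨ max a b = x ↔ a = x ∨ b = x := by
  rcases le_total a b with h | h <;> simp [h, or_comm]

section Recurrence

variable {n : ℕ} (r : Fin n → ℝ) {lam : Fin n → Fin n → ℝ} {A : Finset (Fin n)}
  {v : Fin n}

lemma matchings_erase :
    matchings lam (A.erase v) = (matchings lam A).filter (v ∉ mVerts ·) := by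
  ext M
  simp only [mem_matchings, Finset.mem_filter, isMatching_erase_iff]

lemma matchingTerm_of_notMem_mVerts {M : Finset (Fin n × Fin n)} (hv : v ∈ A)
    (hvM : v ∉ mVerts M) :
    matchingTerm r lam A M = (X - C (r v)) * matchingTerm r lam (A.erase v) M := by
  have : A \ mVerts M = insert v (A.erase v \ mVerts M) := by
    rw [Finset.erase_sdiff_comm, Finset.insert_erase (Finset.mem_sdiff.2 ⟨hv, hvM⟩)]
  rw [matchingTerm, matchingTerm, this, Finset.prod_insert (by simp), mul_assoc]

lemma sum_matchingTerm_notMem_mVerts (hv : v ∈ A) :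
    ∑ M ∈ (matchings lam A).filter (v ∉ mVerts ·), matchingTerm r lam A M =
      (X - C (r v)) * mu r lam (A.erase v) := by
  rw [← matchings_erase, mu_eq_sum_matchingTerm, Finset.mul_sum]
  refine Finset.sum_congr rfl fun M hM => matchingTerm_of_notMem_mVerts r hv ?_
  exact (isMatching_erase_iff.1 (mem_matchings.1 hM)).2

lemma mVerts_insert (e : Fin n × Fin n) (M : Finset (Fin n × Fin n)) :
    mVerts (insert e M) = insert e.1 (insert e.2 (mVerts M)) := by
  ext x
  simp only [mVerts, Finset.image_insert, Finset.mem_union, Finset.mem_insert]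
  tauto

lemma filter_mem_mVerts_eq_biUnion :
    (matchings lam A).filter (v ∈ mVerts ·) =
      (A.erase v).biUnion fun w => (matchings lam A).filter ((min v w, max v w) ∈ ·) := by
  ext M
  simp only [Finset.mem_filter, Finset.mem_biUnion, Finset.mem_erase]
  constructor
  · rintro ⟨hM, hvM⟩
    obtain ⟨e, he, hve⟩ := mem_mVerts.1 hvM
    obtain ⟨hlt, -, h1, h2⟩ := (mem_matchings.1 hM).1 e he
    rcases hve with rfl | rfl
    · exact ⟨e.2, ⟨hlt.ne', h2⟩, hM, by simpa [min_eq_left hlt.le, max_eq_right hlt.le]⟩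
    · exact ⟨e.1, ⟨hlt.ne, h1⟩, hM, by simpa [min_eq_right hlt.le, max_eq_left hlt.le]⟩
  · rintro ⟨w, -, hM, he⟩
    exact ⟨hM, mem_mVerts.2 ⟨_, he, min_eq_or_max_eq_iff.2 (Or.inl rfl)⟩⟩

lemma pairwiseDisjoint_filter_mem_minMax :
    (A.erase v : Set (Fin n)).PairwiseDisjoint
      fun w => (matchings lam A).filter ((min v w, max v w) ∈ ·) := by
  intro w hw w' hw' hww'
  refine Finset.disjoint_filter.2 fun M hM he he' => hww' ?_
  have heq := (mem_matchings.1 hM).eq_of_shared_vertex he he'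
    (min_eq_or_max_eq_iff.2 (Or.inl rfl)) (min_eq_or_max_eq_iff.2 (Or.inl rfl))
  have hw'' := min_eq_or_max_eq_iff (a := v) (b := w) (x := w) |>.2 (Or.inr rfl)
  obtain ⟨hmin, hmax⟩ := Prod.mk.inj heq
  rw [hmin, hmax] at hw''
  exact (min_eq_or_max_eq_iff.1 hw'').resolve_left (Finset.mem_erase.1 hw).1.symm |>.symm

variable (hsym : ∀ j k, lam j k = lam k j)
include hsym

lemma lam_min_max (v w : Fin n) : lam (min v w) (max v w) = lam v w := by
  rcases le_total v w with h | h <;> simp [h, hsym w v]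

lemma isMatching_insert_minMax_iff {w : Fin n} {M : Finset (Fin n × Fin n)} (hvw : v ≠ w)
    (hM : (min v w, max v w) ∉ M) :
    IsMatching lam A (insert (min v w, max v w) M) ↔
      lam v w ≠ 0 ∧ v ∈ A ∧ w ∈ A ∧ IsMatching lam ((A.erase v).erase w) M := by
  rw [isMatching_insert_iff hM, isMatching_erase_iff, isMatching_erase_iff, lam_min_max hsym]
  rcases lt_or_gt_of_ne hvw with h | h
  · simp only [min_eq_left h.le, max_eq_right h.le]
    tauto
  · simp only [min_eq_right h.le, max_eq_left h.le]
    tauto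

lemma matchingTerm_insert_minMax {w : Fin n} {M : Finset (Fin n × Fin n)}
    (hM : (min v w, max v w) ∉ M) :
    matchingTerm r lam A (insert (min v w, max v w) M) =
      C (lam v w) * matchingTerm r lam ((A.erase v).erase w) M := by
  have hsd : A \ mVerts (insert (min v w, max v w) M) = (A.erase v).erase w \ mVerts M := by
    rw [mVerts_insert, Finset.sdiff_insert, Finset.sdiff_insert, Finset.erase_sdiff_comm,
      Finset.erase_sdiff_comm]
    rcases le_total v w with h | h
    · simp only [min_eq_left h, max_eq_right h, Finset.erase_right_comm]
    · simp only [min_eq_right h, max_eq_left h]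
  rw [matchingTerm, matchingTerm, hsd, Finset.prod_insert hM, lam_min_max hsym, C_mul]
  ring

lemma sum_matchingTerm_mem_minMax {w : Fin n} (hvw : v ≠ w) (hv : v ∈ A) (hw : w ∈ A) :
    ∑ M ∈ (matchings lam A).filter ((min v w, max v w) ∈ ·), matchingTerm r lam A M =
      C (lam v w) * mu r lam ((A.erase v).erase w) := by
  set e := (min v w, max v w)
  by_cases hlam : lam v w = 0
  · rw [hlam, C_0, zero_mul, Finset.sum_eq_zero]
    intro M hM
    obtain ⟨hM, he⟩ := Finset.mem_filter.1 hM
    have := ((mem_matchings.1 hM).1 e he).2.1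
    exact absurd (lam_min_max hsym v w ▸ this) (not_not.2 hlam)
  have he : ∀ {M'}, M' ∈ matchings lam ((A.erase v).erase w) → e ∉ M' := fun hM' he =>
    (isMatching_erase_iff.1 (isMatching_erase_iff.1 (mem_matchings.1 hM')).1).2
      (mem_mVerts.2 ⟨e, he, min_eq_or_max_eq_iff.2 (Or.inl rfl)⟩)
  rw [mu_eq_sum_matchingTerm, Finset.mul_sum]
  refine (Finset.sum_nbij' (insert e) (·.erase e) (fun M' hM' => ?_) (fun M hM => ?_)
    (fun M' hM' => Finset.erase_insert (he hM')) (fun M hM => Finset.insert_erase ?_)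
    (fun M' hM' => ?_)).symm
  · refine Finset.mem_filter.2 ⟨mem_matchings.2 ?_, Finset.mem_insert_self _ _⟩
    exact (isMatching_insert_minMax_iff hsym hvw (he hM')).2 ⟨hlam, hv, hw, mem_matchings.1 hM'⟩
  · obtain ⟨hM, heM⟩ := Finset.mem_filter.1 hM
    rw [← Finset.insert_erase heM, mem_matchings,
      isMatching_insert_minMax_iff hsym hvw (Finset.notMem_erase _ _)] at hM
    exact mem_matchings.2 hM.2.2.2
  · exact (Finset.mem_filter.1 hM).2
  · exact (matchingTerm_insert_minMax r hsym (he hM')).symm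

theorem mu_eq_X_sub_C_mul_add_sum (hv : v ∈ A) :
    mu r lam A = (X - C (r v)) * mu r lam (A.erase v) +
      ∑ w ∈ A.erase v, C (lam v w) * mu r lam ((A.erase v).erase w) := by
  rw [mu_eq_sum_matchingTerm, ← Finset.sum_filter_add_sum_filter_not _ (v ∈ mVerts ·),
    sum_matchingTerm_notMem_mVerts r hv, filter_mem_mVerts_eq_biUnion,
    Finset.sum_biUnion pairwiseDisjoint_filter_mem_minMax, add_comm]
  congr 1
  refine Finset.sum_congr rfl fun w hw => ?_
  obtain ⟨hwv, hw⟩ := Finset.mem_erase.1 hw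
  exact sum_matchingTerm_mem_minMax r hsym hwv.symm hv hw

end Recurrence

namespace Complex

open Filter Topology Real

lemma im_ofReal_mul_inv_nonneg {a : ℝ} (ha : a ≤ 0) {ζ : ℂ} (hζ : 0 < ζ.im) :
    0 ≤ ((a : ℂ) * ζ⁻¹).im := by
  rw [im_ofReal_mul, inv_im, neg_div]
  exact mul_nonneg_of_nonpos_of_nonpos ha <| neg_nonpos.2 <| div_nonneg hζ.le (normSq_nonneg ζ)

lemma multiset_prod_eq_norm_mul_exp_sum_arg (m : Multiset ℂ) :
    m.prod = ‖m.prod‖ * exp ((m.map arg).sum * I) := by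
  induction m using Multiset.induction with
  | empty => simp
  | cons a m ih =>
    rw [Multiset.prod_cons, Multiset.map_cons, Multiset.sum_cons, norm_mul, ofReal_add, add_mul,
      exp_add]
    conv_lhs => rw [← norm_mul_exp_arg_mul_I a, ih]
    push_cast
    ring

lemma continuousOn_arg_add_mul_I (x : ℝ) :
    ContinuousOn (fun ε : ℝ => arg (x + ε * I)) (Set.Ioi 0) := by
  refine fun ε hε => (continuousAt_arg ?_).comp_continuousWithinAt (by fun_prop)
  exact Or.inr (by simpa using (Set.mem_Ioi.1 hε).ne')

lemma tendsto_arg_add_mul_I_atTop (x : ℝ) :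
    Tendsto (fun ε : ℝ => arg (x + ε * I)) atTop (𝓝 (π / 2)) := by
  have hI : Tendsto (fun ε : ℝ => arg ((x / ε : ℝ) + I)) atTop (𝓝 (π / 2)) := by
    rw [← arg_I]
    refine (continuousAt_arg (Or.inr (by simp))).tendsto.comp ?_
    simpa using ((tendsto_const_nhds (x := x)).div_atTop tendsto_id).ofReal.add_const I
  refine hI.congr' ((eventually_gt_atTop 0).mono fun ε hε => ?_)
  rw [← arg_real_mul _ hε, ofReal_div, mul_add, mul_div_cancel₀ _ (ofReal_ne_zero.2 hε.ne')]

lemma tendsto_arg_add_mul_I_nhdsGT_zero {x : ℝ} (hx : x ≠ 0) :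
    Tendsto (fun ε : ℝ => arg (x + ε * I)) (𝓝[>] 0) (𝓝 (if 0 < x then 0 else π)) := by
  have hlim : Tendsto (fun ε : ℝ => (x : ℂ) + ε * I) (𝓝[>] 0) (𝓝 x) := by
    have : Continuous (fun ε : ℝ => (x : ℂ) + ε * I) := by fun_prop
    simpa using this.tendsto 0 |>.mono_left nhdsWithin_le_nhds
  split_ifs with hpos
  · have := (continuousAt_arg (Or.inl (by simpa using hpos))).tendsto.comp hlim
    rwa [arg_ofReal_of_nonneg hpos.le] at this
  · have hneg : (x : ℂ).re < 0 := by simpa using lt_of_le_of_ne (not_lt.1 hpos) hx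
    refine (tendsto_arg_nhdsWithin_im_nonneg_of_re_neg_of_im_zero hneg (by simp)).comp
      (tendsto_nhdsWithin_iff.2 ⟨hlim, ?_⟩)
    filter_upwards [self_mem_nhdsWithin] with ε hε
    simpa using (Set.mem_Ioi.1 hε).le

lemma im_ofReal_mul_exp_div_ofReal_mul_exp (a b s t : ℝ) :
    ((a * exp (s * I)) / (b * exp (t * I))).im = a / b * Real.sin (s - t) := by
  rw [mul_div_mul_comm, ← exp_sub, ← sub_mul, ← ofReal_div, ← ofReal_sub, im_ofReal_mul,
    exp_ofReal_mul_I_im]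

end Complex

section HeilmannLieb

variable {n : ℕ} (r : Fin n → ℝ) {lam : Fin n → Fin n → ℝ}
  (hsym : ∀ j k, lam j k = lam k j)
include hsym

lemma aeval_mu_div_mu_erase {A : Finset (Fin n)} {v : Fin n} (hv : v ∈ A) {z : ℂ}
    (hz : aeval z (mu r lam (A.erase v)) ≠ 0) :
    aeval z (mu r lam A) / aeval z (mu r lam (A.erase v)) =
      z - r v + ∑ w ∈ A.erase v, lam v w *
        (aeval z (mu r lam ((A.erase v).erase w)) / aeval z (mu r lam (A.erase v))) := by
  simp only [mu_eq_X_sub_C_mul_add_sum r hsym hv, map_add, map_mul, map_sub, map_sum, aeval_X,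
    aeval_C, Complex.coe_algebraMap, add_div, Finset.sum_div, mul_div_assoc,
    mul_div_cancel_right₀ _ hz]

variable (hnonpos : ∀ j k, lam j k ≤ 0)
include hnonpos

theorem heilmann_lieb {z : ℂ} (hz : 0 < z.im) (A : Finset (Fin n)) :
    aeval z (mu r lam A) ≠ 0 ∧
      ∀ v ∈ A, 0 < (aeval z (mu r lam A) / aeval z (mu r lam (A.erase v))).im := by
  induction A using Finset.strongInduction with
  | H A ih =>
  have hratio : ∀ v ∈ A, 0 < (aeval z (mu r lam A) / aeval z (mu r lam (A.erase v))).im := by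
    intro v hv
    have hsub := Finset.erase_ssubset hv
    rw [aeval_mu_div_mu_erase r hsym hv (ih _ hsub).1, Complex.add_im, Complex.sub_im,
      Complex.ofReal_im, sub_zero, Complex.im_sum]
    refine add_pos_of_pos_of_nonneg hz (Finset.sum_nonneg fun w hw => ?_)
    rw [← inv_div]
    exact Complex.im_ofReal_mul_inv_nonneg (hnonpos v w) ((ih _ hsub).2 w hw)
  refine ⟨?_, hratio⟩
  rcases A.eq_empty_or_nonempty with rfl | ⟨v, hv⟩
  · simp [mu_empty]
  · intro h0
    simpa [h0] using hratio v hv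

lemma aeval_mu_ne_zero {z : ℂ} (hz : z.im ≠ 0) (A : Finset (Fin n)) :
    aeval z (mu r lam A) ≠ 0 := by
  rcases hz.lt_or_gt with hz | hz
  · have := (heilmann_lieb r hsym hnonpos (z := (starRingEnd ℂ) z) (by simpa using hz) A).1
    rw [← Complex.conjAe_coe, ← AlgEquiv.coe_toAlgHom, aeval_algHom_apply] at this
    exact fun h => this (by rw [h, map_zero])
  · exact (heilmann_lieb r hsym hnonpos hz A).1

theorem mu_splits (A : Finset (Fin n)) : (mu r lam A).Splits := by
  refine Splits.of_splits_map (algebraMap ℝ ℂ) (IsAlgClosed.splits _) fun z hz => ?_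
  rw [mem_roots_map_of_injective (algebraMap ℝ ℂ).injective (mu_monic r lam A).ne_zero,
    ← aeval_def] at hz
  have him : z.im = 0 := by
    by_contra h
    exact aeval_mu_ne_zero r hsym hnonpos h A hz
  exact ⟨z.re, Complex.ext (by simp) (by simp [him])⟩

end HeilmannLieb


section

open Filter Topology Real

lemma Real.mem_Icc_of_sin_pos {D : ℝ → ℝ} (hc : ContinuousOn D (Set.Ioi 0))
    (hsin : ∀ ε > 0, 0 < Real.sin (D ε)) (htop : Tendsto D atTop (𝓝 (π / 2))) {L : ℝ}
    (h0 : Tendsto D (𝓝[>] 0) (𝓝 L)) : L ∈ Set.Icc 0 π := by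
  obtain ⟨ε₁, hε₁, hε₁pos⟩ := ((htop.eventually (Ioo_mem_nhds (a := 0) (b := π)
    (by positivity) (by linarith [pi_pos]))).and (eventually_gt_atTop 0)).exists
  have hIcc : ∀ {a b}, a ∈ Set.Ioi (0 : ℝ) → b ∈ Set.Ioi 0 →
      Set.Icc (D a) (D b) ⊆ D '' Set.Ioi 0 :=
    fun ha hb => isPreconnected_Ioi.intermediate_value ha hb hc
  have hnot : ∀ x ∈ D '' Set.Ioi 0, x ≠ 0 ∧ x ≠ π := by
    rintro _ ⟨ε, hε, rfl⟩
    have := hsin ε hε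
    exact ⟨fun h => by simp [h] at this, fun h => by simp [h] at this⟩
  have hmaps : ∀ ε > 0, D ε ∈ Set.Icc 0 π := by
    intro ε hε
    by_contra hout
    rcases not_and_or.1 hout with h | h
    · exact (hnot 0 (hIcc hε hε₁pos ⟨(not_le.1 h).le, hε₁.1.le⟩)).1 rfl
    · exact (hnot π (hIcc hε₁pos hε ⟨hε₁.2.le, (not_le.1 h).le⟩)).2 rfl
  exact isClosed_Icc.mem_of_tendsto h0 (eventually_nhdsWithin_of_forall hmaps)

lemma Multiset.sum_map_ite_eq_card_filter_not_mul {α : Type*} (m : Multiset α) (p : α → Prop)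
    [DecidablePred p] (c : ℝ) :
    (m.map fun a => if p a then 0 else c).sum = (m.filter (¬ p ·)).card * c := by
  induction m using Multiset.induction with
  | empty => simp
  | cons a m ih =>
    by_cases h : p a
    · simp [h, ih]
    · simp [h, ih]
      ring

lemma Multiset.pos_neg_one_pow_card_filter_mul_prod (m : Multiset ℝ) {θ : ℝ} (hθ : θ ∉ m) :
    0 < (-1) ^ (m.filter (¬ · < θ)).card * (m.map (θ - ·)).prod := by
  induction m using Multiset.induction with
  | empty => simp
  | cons a m ih =>
    have ih := ih fun h => hθ (Multiset.mem_cons_of_mem h)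
    have ha : a ≠ θ := fun h => hθ (h ▸ Multiset.mem_cons_self a m)
    rw [Multiset.map_cons, Multiset.prod_cons]
    by_cases h : a < θ
    · rw [Multiset.filter_cons_of_neg (p := (¬ · < θ)) m (not_not.2 h)]
      nlinarith
    · rw [Multiset.filter_cons_of_pos (p := (¬ · < θ)) m h, Multiset.card_cons, pow_succ]
      nlinarith [lt_of_le_of_ne (not_lt.1 h) ha.symm]

end

section Interlacing

open Filter Topology Real Complex

/-- A continuous branch, for `ε > 0`, of the argument of `∏_{a ∈ m} (θ + iε - a)`. -/
noncomputable def argSum (m : Multiset ℝ) (θ ε : ℝ) : ℝ :=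
  (m.map fun a => arg (((θ - a : ℝ) : ℂ) + ε * I)).sum

lemma aeval_eq_norm_mul_exp_argSum {p : ℝ[X]} (hp : p.Monic) (hps : p.Splits) (θ ε : ℝ) :
    aeval ((θ : ℂ) + ε * I) p =
      ‖aeval ((θ : ℂ) + ε * I) p‖ * exp (argSum p.roots θ ε * I) := by
  have hprod : aeval ((θ : ℂ) + ε * I) p =
      (p.roots.map fun a => ((θ - a : ℝ) : ℂ) + ε * I).prod := by
    conv_lhs => rw [hps.eq_prod_roots_of_monic hp]
    simp only [map_multiset_prod, Multiset.map_map, Function.comp_def, map_sub, aeval_X, aeval_C,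
      Complex.coe_algebraMap, ofReal_sub]
    congr 1
    exact Multiset.map_congr rfl fun a _ => by ring
  simpa [hprod, argSum, Multiset.map_map, Function.comp_def] using
    multiset_prod_eq_norm_mul_exp_sum_arg (p.roots.map fun a => ((θ - a : ℝ) : ℂ) + ε * I)

lemma continuousOn_argSum (m : Multiset ℝ) (θ : ℝ) : ContinuousOn (argSum m θ) (Set.Ioi 0) :=
  continuousOn_multiset_sum m fun a _ => continuousOn_arg_add_mul_I (θ - a)

lemma tendsto_argSum_atTop (m : Multiset ℝ) (θ : ℝ) :
    Tendsto (argSum m θ) atTop (𝓝 (m.card * (π / 2))) := by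
  have := tendsto_multiset_sum m fun a _ => tendsto_arg_add_mul_I_atTop (θ - a)
  rwa [Multiset.map_const', Multiset.sum_replicate, nsmul_eq_mul] at this

lemma tendsto_argSum_nhdsGT_zero {m : Multiset ℝ} {θ : ℝ} (hθ : θ ∉ m) :
    Tendsto (argSum m θ) (𝓝[>] 0) (𝓝 ((m.filter (¬ · < θ)).card * π)) := by
  have := tendsto_multiset_sum m fun a ha =>
    tendsto_arg_add_mul_I_nhdsGT_zero (sub_ne_zero_of_ne (ne_of_mem_of_not_mem ha hθ).symm)
  simp only [sub_pos, Multiset.sum_map_ite_eq_card_filter_not_mul] at this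
  exact this

variable {p q : ℝ[X]} (hp : p.Monic) (hq : q.Monic) (hps : p.Splits) (hqs : q.Splits)
  (hdeg : p.natDegree = q.natDegree + 1) {θ : ℝ} (hpθ : p.eval θ ≠ 0)
  (hqθ : q.eval θ ≠ 0)
  (him : ∀ z : ℂ, 0 < z.im → 0 < (aeval z p / aeval z q).im)
include hp hq hps hqs hdeg hpθ hqθ him

lemma card_filter_roots_not_lt_eq_or_eq_add_one :
    (p.roots.filter (¬ · < θ)).card = (q.roots.filter (¬ · < θ)).card ∨
      (p.roots.filter (¬ · < θ)).card = (q.roots.filter (¬ · < θ)).card + 1 := by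
  have hsin : ∀ ε > 0, 0 < Real.sin (argSum p.roots θ ε - argSum q.roots θ ε) := by
    intro ε hε
    have h := him ((θ : ℂ) + ε * I) (by simpa using hε)
    rw [aeval_eq_norm_mul_exp_argSum hp hps, aeval_eq_norm_mul_exp_argSum hq hqs,
      im_ofReal_mul_exp_div_ofReal_mul_exp] at h
    exact pos_of_mul_pos_right h (by positivity)
  have htop := (tendsto_argSum_atTop p.roots θ).sub (tendsto_argSum_atTop q.roots θ)
  rw [← hps.natDegree_eq_card_roots, ← hqs.natDegree_eq_card_roots, hdeg, Nat.cast_succ,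
    show ∀ x : ℝ, (x + 1) * (π / 2) - x * (π / 2) = π / 2 by intro x; ring] at htop
  obtain ⟨h1, h2⟩ := Real.mem_Icc_of_sin_pos
    ((continuousOn_argSum p.roots θ).sub (continuousOn_argSum q.roots θ)) hsin htop
    ((tendsto_argSum_nhdsGT_zero fun h => hpθ (isRoot_of_mem_roots h)).sub
      (tendsto_argSum_nhdsGT_zero fun h => hqθ (isRoot_of_mem_roots h)))
  have hle : ((q.roots.filter (¬ · < θ)).card : ℝ) ≤ (p.roots.filter (¬ · < θ)).card ∧
      ((p.roots.filter (¬ · < θ)).card : ℝ) ≤ (q.roots.filter (¬ · < θ)).card + 1 := by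
    constructor <;> nlinarith [pi_pos]
  norm_cast at hle
  omega

theorem card_filter_roots_lt_eq_add_ite :
    (p.roots.filter (· < θ)).card =
      (q.roots.filter (· < θ)).card + if 0 < p.eval θ / q.eval θ then 1 else 0 := by
  have hsp := p.roots.pos_neg_one_pow_card_filter_mul_prod fun h => hpθ (isRoot_of_mem_roots h)
  have hsq := q.roots.pos_neg_one_pow_card_filter_mul_prod fun h => hqθ (isRoot_of_mem_roots h)
  rw [← hps.eval_eq_prod_roots_of_monic hp] at hsp
  rw [← hqs.eval_eq_prod_roots_of_monic hq] at hsq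
  have hcp := Multiset.card_add (p.roots.filter (· < θ)) (p.roots.filter (¬ · < θ))
  have hcq := Multiset.card_add (q.roots.filter (· < θ)) (q.roots.filter (¬ · < θ))
  rw [Multiset.filter_add_not, ← hps.natDegree_eq_card_roots] at hcp
  rw [Multiset.filter_add_not, ← hqs.natDegree_eq_card_roots] at hcq
  have hratio : p.eval θ / q.eval θ = ((-1) ^ (q.roots.filter (¬ · < θ)).card * p.eval θ) /
      ((-1) ^ (q.roots.filter (¬ · < θ)).card * q.eval θ) :=
    (mul_div_mul_left _ _ (pow_ne_zero _ (by norm_num))).symm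
  rcases card_filter_roots_not_lt_eq_or_eq_add_one hp hq hps hqs hdeg hpθ hqθ him with h | h
  · rw [h] at hsp
    rw [if_pos (hratio ▸ div_pos hsp hsq)]
    omega
  · rw [h, pow_succ] at hsp
    rw [if_neg (hratio ▸ (div_neg_of_neg_of_pos (by linarith) hsq).not_gt)]
    omega

end Interlacing

lemma Finset.sdiff_toFinset_cons {α : Type*} [DecidableEq α] (B : Finset α) (a : α)
    (l : List α) :
    B \ (a :: l).toFinset = B.erase a \ l.toFinset := by
  rw [List.toFinset_cons, Finset.sdiff_insert, Finset.erase_sdiff_comm]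

section Sylvester

variable {n : ℕ} (r : Fin n → ℝ) {lam : Fin n → Fin n → ℝ}
  (hsym : ∀ j k, lam j k = lam k j)
  (hnonpos : ∀ j k, lam j k ≤ 0)
include hsym hnonpos

theorem card_roots_mu_lt_eq_add_ite {A : Finset (Fin n)} {v : Fin n} (hv : v ∈ A) {θ : ℝ}
    (hA : (mu r lam A).eval θ ≠ 0) (hAv : (mu r lam (A.erase v)).eval θ ≠ 0) :
    ((mu r lam A).roots.filter (· < θ)).card =
      ((mu r lam (A.erase v)).roots.filter (· < θ)).card +
        if 0 < (mu r lam A).eval θ / (mu r lam (A.erase v)).eval θ then 1 else 0 :=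
  card_filter_roots_lt_eq_add_ite (mu_monic r lam A) (mu_monic r lam _)
    (mu_splits r hsym hnonpos A) (mu_splits r hsym hnonpos _)
    (by rw [mu_natDegree, mu_natDegree, Finset.card_erase_add_one hv]) hA hAv
    fun _ hz => (heilmann_lieb r hsym hnonpos hz A).2 v hv

theorem sum_ite_pos_add_card_roots_mu_lt {θ : ℝ} (hθ : ∀ A, (mu r lam A).eval θ ≠ 0)
    {l : List (Fin n)} (hl : l.Nodup) {B : Finset (Fin n)} (hlB : ∀ v ∈ l, v ∈ B) :
    (∑ j ∈ Finset.range l.length,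
        if 0 < (mu r lam (B \ (l.take j).toFinset)).eval θ /
          (mu r lam (B \ (l.take (j + 1)).toFinset)).eval θ then 1 else 0) +
      ((mu r lam (B \ l.toFinset)).roots.filter (· < θ)).card =
      ((mu r lam B).roots.filter (· < θ)).card := by
  induction l generalizing B with
  | nil => simp
  | cons a l ih =>
    obtain ⟨hal, hl⟩ := List.nodup_cons.1 hl
    have hlB' : ∀ v ∈ l, v ∈ B.erase a := fun v hv =>
      Finset.mem_erase.2 ⟨fun h => hal (h ▸ hv), hlB v (List.mem_cons_of_mem a hv)⟩
    rw [card_roots_mu_lt_eq_add_ite r hsym hnonpos (hlB a List.mem_cons_self) (hθ _) (hθ _),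
      ← ih hl hlB', List.length_cons, Finset.sum_range_succ']
    simp only [List.take_succ_cons, Finset.sdiff_toFinset_cons, List.take_zero, List.toFinset_nil,
      Finset.sdiff_empty]
    ring

theorem card_filter_pos_ratio_eq_card_roots_mu_lt {θ : ℝ}
    (hθ : ∀ A, (mu r lam A).eval θ ≠ 0)
    {l : List (Fin n)} (hl : l.Nodup) (hlen : l.length = n) :
    ((Finset.univ : Finset (Fin n)).filter fun j =>
        0 < (mu r lam (Finset.univ \ (l.take j.val).toFinset)).eval θ /
            (mu r lam (Finset.univ \ (l.take (j.val + 1)).toFinset)).eval θ).card =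
      Multiset.card ((mu r lam (Finset.univ : Finset (Fin n))).roots.filter fun x => x < θ) := by
  have huniv : l.toFinset = Finset.univ := Finset.eq_univ_of_card _ <| by
    rw [List.toFinset_card_of_nodup hl, hlen, Fintype.card_fin]
  rw [← sum_ite_pos_add_card_roots_mu_lt r hsym hnonpos hθ hl (B := Finset.univ) (by simp),
    huniv, Finset.sdiff_self, mu_empty, roots_one, Finset.card_filter, hlen]
  simp [Fin.sum_univ_eq_sum_range
    (fun j => if 0 < (mu r lam (Finset.univ \ (l.take j).toFinset)).eval θ /
      (mu r lam (Finset.univ \ (l.take (j + 1)).toFinset)).eval θ then 1 else 0)]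

end Sylvester

theorem stmt_9_general (n : ℕ) (r : Fin n → ℝ) (lam : Fin n → Fin n → ℝ)
    (hsym : ∀ j k, lam j k = lam k j) (hnonpos : ∀ j k, lam j k ≤ 0)
    (l : List (Fin n)) (hnodup : l.Nodup)
    (hlen : l.length = n) (θ : ℝ)
    (hθ : ∀ A : Finset (Fin n), A.Nonempty → (mu r lam A).eval θ ≠ 0) :
    ((Finset.univ : Finset (Fin n)).filter fun j =>
        0 < (mu r lam (Finset.univ \ (l.take j.val).toFinset)).eval θ /
            (mu r lam (Finset.univ \ (l.take (j.val + 1)).toFinset)).eval θ).card =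
      Multiset.card ((mu r lam (Finset.univ : Finset (Fin n))).roots.filter
        fun x => x < θ) ∧
    ((Finset.univ : Finset (Fin n)).filter fun j =>
        0 < (mu r lam (Finset.univ \ (l.reverse.take j.val).toFinset)).eval θ /
            (mu r lam (Finset.univ \ (l.reverse.take (j.val + 1)).toFinset)).eval θ).card =
      Multiset.card ((mu r lam (Finset.univ : Finset (Fin n))).roots.filter
        fun x => x < θ) := by
  have hθ' : ∀ A : Finset (Fin n), (mu r lam A).eval θ ≠ 0 := fun A =>
    A.eq_empty_or_nonempty.elim (fun h => by simp [h, mu_empty]) (hθ A)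
  exact ⟨card_filter_pos_ratio_eq_card_roots_mu_lt r hsym hnonpos hθ' hnodup hlen,
    card_filter_pos_ratio_eq_card_roots_mu_lt r hsym hnonpos hθ' (List.nodup_reverse.2 hnodup)
      (by rw [List.length_reverse, hlen])⟩

/-- (Sylvester theorem for matching polynomials) for a Hamiltonian path
`c : i₁ → iₙ` (given as a duplicate-free list `l` of all `n` vertices with consecutive
vertices adjacent) and `θ` with `μ(H)(θ) ≠ 0` for every induced subgraph `H` on a
nonempty vertex set, both `V_c(θ)` and `V_{−c}(θ)` equal the number of roots of `μ(G)`
(with multiplicity) in `(−∞, θ)`. -/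
theorem stmt_9 (n : ℕ) (hn : 0 < n) (r : Fin n → ℝ) (lam : Fin n → Fin n → ℝ)
    (hsym : ∀ j k, lam j k = lam k j) (hnonpos : ∀ j k, lam j k ≤ 0)
    (hdiag : ∀ i, lam i i = 0) (l : List (Fin n)) (hnodup : l.Nodup)
    (hlen : l.length = n) (hchain : l.Chain' fun u v => lam u v ≠ 0) (θ : ℝ)
    (hθ : ∀ A : Finset (Fin n), A.Nonempty → (mu r lam A).eval θ ≠ 0) :
    ((Finset.univ : Finset (Fin n)).filter fun j =>
        0 < (mu r lam (Finset.univ \ (l.take j.val).toFinset)).eval θ /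
            (mu r lam (Finset.univ \ (l.take (j.val + 1)).toFinset)).eval θ).card =
      Multiset.card ((mu r lam (Finset.univ : Finset (Fin n))).roots.filter
        fun x => x < θ) ∧
    ((Finset.univ : Finset (Fin n)).filter fun j =>
        0 < (mu r lam (Finset.univ \ (l.reverse.take j.val).toFinset)).eval θ /
            (mu r lam (Finset.univ \ (l.reverse.take (j.val + 1)).toFinset)).eval θ).card =
      Multiset.card ((mu r lam (Finset.univ : Finset (Fin n))).roots.filter
        fun x => x < θ) :=
  stmt_9_general n r lam hsym hnonpos l hnodup hlen θ hθ
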